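/- Let μ ∈ (0,1), κ ∈ (0, 1−μ), λ ∈ (0,1], ε ∈ (0,1], and let K : [0,1]×[0,1] → ℝ be continuous and κ-Hölder in its first variable. Then there exists a constant C > 0 such that for every continuous v : [0,1] → ℝ and all θ₁, θ₂ ∈ [0,1] with θ₁ ≠ θ₂, |(𝒦₂v)(θ₁^{1/λ}) − (𝒦₂v)(θ₂^{1/λ})| ≤ C |θ₁ − θ₂|^κ · max_{θ∈[0,1]} |v(θ)|. -/

import Mathlib

/-!
Put `p = 1/λ ≥ 1`. On `[0,1]` the map `θ ↦ θ^p` is `p`-Lipschitz, so it suffices that `𝒦₂v` is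
`κ`-Hölder on `[0,1]` with constant `(2M + L) ‖v‖∞ / (1-μ)`, where `M` bounds `|K|`.

For `t₁ ≤ t₂`, put `a = εt₁ ≤ b = εt₂` and split `(𝒦₂v)(t₂) - (𝒦₂v)(t₁)` into the change of the kernel
`(b-τ)^{-μ} - (a-τ)^{-μ}` on `[0,a]`, the change `K(t₂,τ) - K(t₁,τ)` on `[0,a]`, and the new piece
over `[a,b]`. Since `c ↦ (c-τ)^{-μ}` is decreasing, the explicit primitive of the kernel bounds the
first and last pieces by `M ‖v‖∞ (b-a)^{1-μ}/(1-μ)`, and the middle one by `L |t₂-t₁|^κ ‖v‖∞/(1-μ)`.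
Finally `(b-a)^{1-μ} ≤ (t₂-t₁)^{1-μ} ≤ (t₂-t₁)^κ` because `ε ≤ 1` and `κ ≤ 1-μ`.
-/

open MeasureTheory Set

/-- The weakly singular delay Volterra integral operator
`(𝒦₂v)(t) = ∫₀^{εt} (εt-τ)^{-μ} K(t,τ) v(τ) dτ`. -/
noncomputable def K2op (μ ε : ℝ) (K : ℝ → ℝ → ℝ) (v : ℝ → ℝ) (t : ℝ) : ℝ :=
  ∫ τ in (0:ℝ)..(ε * t), (ε * t - τ) ^ (-μ) * K t τ * v τ

namespace Real

theorem abs_rpow_sub_rpow_le_mul_abs_sub {p x y : ℝ} (hp : 1 ≤ p) (hx : x ∈ Icc (0:ℝ) 1)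
    (hy : y ∈ Icc (0:ℝ) 1) : |x ^ p - y ^ p| ≤ p * |x - y| := by
  have hderiv_le : ∀ t ∈ Icc (0:ℝ) 1, ‖p * t ^ (p - 1)‖ ≤ p := fun t ht => by
    rw [norm_mul, norm_of_nonneg (by linarith), norm_of_nonneg (rpow_nonneg ht.1 _)]
    exact mul_le_of_le_one_right (by linarith) (rpow_le_one ht.1 ht.2 (by linarith))
  simpa only [norm_eq_abs] using
    (convex_Icc (0:ℝ) 1).norm_image_sub_le_of_norm_hasDerivWithin_le
      (fun t _ => (hasDerivAt_rpow_const (Or.inr hp)).hasDerivWithinAt) hderiv_le hy hx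

theorem rpow_le_rpow_of_le_of_exponent_ge {x y p q : ℝ} (hx : 0 ≤ x) (hxy : x ≤ y) (hy : y ≤ 1)
    (hq : 0 ≤ q) (hqp : q ≤ p) : x ^ p ≤ y ^ q :=
  (rpow_le_rpow hx hxy (hq.trans hqp)).trans (rpow_le_rpow_of_exponent_ge' (hx.trans hxy) hy hq hqp)

end Real

open Real

section SingularKernel

variable {μ : ℝ}

theorem intervalIntegrable_sub_rpow_neg (hμ : μ < 1) (c x y : ℝ) :
    IntervalIntegrable (fun τ => (c - τ) ^ (-μ)) volume x y := by
  simpa using (intervalIntegral.intervalIntegrable_rpow' (a := c - x) (b := c - y)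
    (by linarith : (-1:ℝ) < -μ)).comp_sub_left c

theorem integral_sub_rpow_neg (hμ : μ < 1) (c x y : ℝ) :
    ∫ τ in x..y, (c - τ) ^ (-μ) = ((c - x) ^ (1 - μ) - (c - y) ^ (1 - μ)) / (1 - μ) := by
  rw [intervalIntegral.integral_comp_sub_left (fun t => t ^ (-μ)) c,
    integral_rpow (Or.inl (by linarith))]
  ring_nf

theorem integral_sub_rpow_neg_right_endpoint (hμ : μ < 1) (c x : ℝ) :
    ∫ τ in x..c, (c - τ) ^ (-μ) = (c - x) ^ (1 - μ) / (1 - μ) := by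
  rw [integral_sub_rpow_neg hμ, sub_self, zero_rpow (by linarith), sub_zero]

theorem integral_sub_rpow_neg_sub_sub_rpow_neg_le (hμ : μ < 1) {a b : ℝ} (ha : 0 ≤ a)
    (hab : a ≤ b) :
    ∫ τ in (0:ℝ)..a, ((a - τ) ^ (-μ) - (b - τ) ^ (-μ)) ≤ (b - a) ^ (1 - μ) / (1 - μ) := by
  rw [intervalIntegral.integral_sub (intervalIntegrable_sub_rpow_neg hμ a 0 a)
    (intervalIntegrable_sub_rpow_neg hμ b 0 a), integral_sub_rpow_neg_right_endpoint hμ,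
    integral_sub_rpow_neg hμ, sub_zero, sub_zero, ← sub_div]
  have hmono : a ^ (1 - μ) ≤ b ^ (1 - μ) := rpow_le_rpow ha hab (by linarith)
  gcongr
  linarith

end SingularKernel

theorem abs_integral_mul_le_of_abs_le {f g h : ℝ → ℝ} {a b B : ℝ} (hab : a ≤ b)
    (hh : IntervalIntegrable h volume a b) (hgh : ∀ τ ∈ Ioo a b, |g τ| ≤ h τ)
    (hf : ∀ τ ∈ Ioo a b, |f τ| ≤ B) :
    |∫ τ in a..b, g τ * f τ| ≤ B * ∫ τ in a..b, h τ := by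
  have hpointwise : ∀ᵐ τ ∂volume, τ ∈ Ioc a b → ‖g τ * f τ‖ ≤ h τ * B := by
    filter_upwards [compl_mem_ae_iff.mpr (measure_singleton b)] with τ hτb hτ
    have hτ' : τ ∈ Ioo a b := ⟨hτ.1, lt_of_le_of_ne hτ.2 hτb⟩
    rw [norm_mul, norm_eq_abs, norm_eq_abs]
    exact mul_le_mul (hgh τ hτ') (hf τ hτ') (abs_nonneg _) ((abs_nonneg _).trans (hgh τ hτ'))
  have := intervalIntegral.norm_integral_le_of_norm_le hab hpointwise (hh.mul_const B)
  rwa [intervalIntegral.integral_mul_const, mul_comm] at this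

noncomputable def abelIntegral (μ c : ℝ) (f : ℝ → ℝ) : ℝ :=
  ∫ τ in (0:ℝ)..c, (c - τ) ^ (-μ) * f τ

section AbelIntegral

variable {μ a b : ℝ} {f₁ f₂ : ℝ → ℝ}

theorem abelIntegral_sub_abelIntegral (hμ : μ < 1) (ha : 0 ≤ a) (hab : a ≤ b)
    (hf₁ : ContinuousOn f₁ (Icc 0 a)) (hf₂ : ContinuousOn f₂ (Icc 0 b)) :
    abelIntegral μ b f₂ - abelIntegral μ a f₁ =
      (∫ τ in (0:ℝ)..a, ((b - τ) ^ (-μ) - (a - τ) ^ (-μ)) * f₂ τ)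
        + (∫ τ in (0:ℝ)..a, (a - τ) ^ (-μ) * (f₂ τ - f₁ τ))
        + ∫ τ in a..b, (b - τ) ^ (-μ) * f₂ τ := by
  have hf₂a : ContinuousOn f₂ (uIcc 0 a) := by
    rw [uIcc_of_le ha]; exact hf₂.mono (Icc_subset_Icc_right hab)
  have hf₂b : ContinuousOn f₂ (uIcc a b) := by
    rw [uIcc_of_le hab]; exact hf₂.mono (Icc_subset_Icc_left ha)
  have hf₁a : ContinuousOn f₁ (uIcc 0 a) := by rwa [uIcc_of_le ha]
  have hba := (intervalIntegrable_sub_rpow_neg hμ b 0 a).mul_continuousOn hf₂a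
  have hbb := (intervalIntegrable_sub_rpow_neg hμ b a b).mul_continuousOn hf₂b
  have haa₂ := (intervalIntegrable_sub_rpow_neg hμ a 0 a).mul_continuousOn hf₂a
  have haa₁ := (intervalIntegrable_sub_rpow_neg hμ a 0 a).mul_continuousOn hf₁a
  simp only [abelIntegral, sub_mul, mul_sub,
    ← intervalIntegral.integral_add_adjacent_intervals hba hbb,
    intervalIntegral.integral_sub hba haa₂, intervalIntegral.integral_sub haa₂ haa₁]
  ring

theorem abs_abelIntegral_sub_le {B D : ℝ} (hμ0 : 0 ≤ μ) (hμ1 : μ < 1) (ha : 0 ≤ a)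
    (hab : a ≤ b) (hf₁ : ContinuousOn f₁ (Icc 0 a)) (hf₂ : ContinuousOn f₂ (Icc 0 b))
    (hB : ∀ τ ∈ Icc 0 b, |f₂ τ| ≤ B) (hD : ∀ τ ∈ Icc 0 a, |f₂ τ - f₁ τ| ≤ D) :
    |abelIntegral μ b f₂ - abelIntegral μ a f₁|
      ≤ (2 * B * (b - a) ^ (1 - μ) + D * a ^ (1 - μ)) / (1 - μ) := by
  have hB0 : 0 ≤ B := (abs_nonneg _).trans (hB 0 ⟨le_rfl, ha.trans hab⟩)
  have hkernel_nonneg {c d : ℝ} : ∀ τ ∈ Ioo d c, |(c - τ) ^ (-μ)| ≤ (c - τ) ^ (-μ) :=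
    fun τ hτ => (abs_of_nonneg (rpow_nonneg (sub_nonneg.2 hτ.2.le) _)).le
  have hkernel_antitone : ∀ τ ∈ Ioo 0 a,
      |(b - τ) ^ (-μ) - (a - τ) ^ (-μ)| ≤ (a - τ) ^ (-μ) - (b - τ) ^ (-μ) := fun τ hτ => by
    rw [abs_sub_comm, abs_of_nonneg (sub_nonneg.2 (rpow_le_rpow_of_nonpos (sub_pos.2 hτ.2)
      (by linarith) (by linarith)))]
  have h₁ := abs_integral_mul_le_of_abs_le ha
    ((intervalIntegrable_sub_rpow_neg hμ1 a 0 a).sub (intervalIntegrable_sub_rpow_neg hμ1 b 0 a))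
    hkernel_antitone (fun τ hτ => hB τ ⟨hτ.1.le, hτ.2.le.trans hab⟩)
  have h₂ := abs_integral_mul_le_of_abs_le ha (intervalIntegrable_sub_rpow_neg hμ1 a 0 a)
    hkernel_nonneg (fun τ hτ => hD τ (Ioo_subset_Icc_self hτ))
  have h₃ := abs_integral_mul_le_of_abs_le hab (intervalIntegrable_sub_rpow_neg hμ1 b a b)
    hkernel_nonneg (fun τ hτ => hB τ ⟨ha.trans hτ.1.le, hτ.2.le⟩)
  rw [integral_sub_rpow_neg_right_endpoint hμ1, sub_zero] at h₂
  rw [integral_sub_rpow_neg_right_endpoint hμ1] at h₃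
  have h₁' := h₁.trans <| mul_le_mul_of_nonneg_left
    (integral_sub_rpow_neg_sub_sub_rpow_neg_le hμ1 ha hab) hB0
  rw [abelIntegral_sub_abelIntegral hμ1 ha hab hf₁ hf₂]
  calc _ ≤ _ := abs_add_three _ _ _
    _ ≤ _ := add_le_add_three h₁' h₂ h₃
    _ = _ := by ring

end AbelIntegral

theorem K2op_eq_abelIntegral (μ ε : ℝ) (K : ℝ → ℝ → ℝ) (v : ℝ → ℝ) (t : ℝ) :
    K2op μ ε K v t = abelIntegral μ (ε * t) (fun τ => K t τ * v τ) := by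
  simp only [K2op, abelIntegral, mul_assoc]

theorem abs_K2op_sub_le {μ κ ε M S Lip : ℝ} {K : ℝ → ℝ → ℝ} {v : ℝ → ℝ}
    (hμ : μ ∈ Ico (0:ℝ) 1) (hκ : κ ∈ Icc 0 (1 - μ)) (hε : ε ∈ Icc (0:ℝ) 1)
    (hK : ∀ t ∈ Icc (0:ℝ) 1, ContinuousOn (K t) (Icc 0 1))
    (hM : ∀ t ∈ Icc (0:ℝ) 1, ∀ s ∈ Icc (0:ℝ) 1, |K t s| ≤ M)
    (hKH : ∀ θ₁ ∈ Icc (0:ℝ) 1, ∀ θ₂ ∈ Icc (0:ℝ) 1, ∀ s ∈ Icc (0:ℝ) 1,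
      |K θ₁ s - K θ₂ s| ≤ Lip * |θ₁ - θ₂| ^ κ)
    (hv : ContinuousOn v (Icc 0 1)) (hS : ∀ s ∈ Icc (0:ℝ) 1, |v s| ≤ S)
    {t₁ t₂ : ℝ} (ht₁ : t₁ ∈ Icc (0:ℝ) 1) (ht₂ : t₂ ∈ Icc (0:ℝ) 1) :
    |K2op μ ε K v t₁ - K2op μ ε K v t₂| ≤ (2 * M + Lip) * S / (1 - μ) * |t₁ - t₂| ^ κ := by
  wlog h : t₁ ≤ t₂ generalizing t₁ t₂
  · rw [abs_sub_comm, abs_sub_comm t₁]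
    exact this ht₂ ht₁ (le_of_not_ge h)
  obtain ⟨hμ0, hμ1⟩ := hμ
  have hM0 : 0 ≤ M := (abs_nonneg _).trans (hM t₁ ht₁ t₁ ht₁)
  have hS0 : 0 ≤ S := (abs_nonneg _).trans (hS t₁ ht₁)
  have hΔK : ∀ s ∈ Icc (0:ℝ) 1, |K t₂ s - K t₁ s| ≤ Lip * |t₁ - t₂| ^ κ := fun s hs => by
    rw [abs_sub_comm t₁]; exact hKH t₂ ht₂ t₁ ht₁ s hs
  have hL0 : 0 ≤ Lip * |t₁ - t₂| ^ κ := (abs_nonneg _).trans (hΔK t₁ ht₁)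
  have hεt₁ : 0 ≤ ε * t₁ := mul_nonneg hε.1 ht₁.1
  have hεt : ε * t₁ ≤ ε * t₂ := mul_le_mul_of_nonneg_left h hε.1
  have hεt₂ : ε * t₂ ≤ 1 := mul_le_one₀ hε.2 ht₂.1 ht₂.2
  have hIcc {c : ℝ} (τ : ℝ) (hc : c ≤ 1) (hτ : τ ∈ Icc 0 c) : τ ∈ Icc (0:ℝ) 1 :=
    Icc_subset_Icc_right hc hτ
  have hbound := abs_abelIntegral_sub_le (f₁ := fun τ => K t₁ τ * v τ)
    (f₂ := fun τ => K t₂ τ * v τ) (B := M * S) (D := Lip * |t₁ - t₂| ^ κ * S) hμ0 hμ1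
    hεt₁ hεt (((hK t₁ ht₁).mul hv).mono fun τ => hIcc τ (hεt.trans hεt₂))
    (((hK t₂ ht₂).mul hv).mono fun τ => hIcc τ hεt₂)
    (fun τ hτ => by
      rw [abs_mul]
      have hτ1 := hIcc τ hεt₂ hτ
      exact mul_le_mul (hM t₂ ht₂ τ hτ1) (hS τ hτ1) (abs_nonneg _) hM0)
    (fun τ hτ => by
      have hτ1 := hIcc τ (hεt.trans hεt₂) hτ
      rw [← sub_mul, abs_mul]
      exact mul_le_mul (hΔK τ hτ1) (hS τ hτ1) (abs_nonneg _) hL0)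
  have hinc : (ε * t₂ - ε * t₁) ^ (1 - μ) ≤ |t₁ - t₂| ^ κ := by
    rw [abs_sub_comm, abs_of_nonneg (sub_nonneg.2 h), ← mul_sub]
    exact rpow_le_rpow_of_le_of_exponent_ge (mul_nonneg hε.1 (sub_nonneg.2 h))
      (mul_le_of_le_one_left (sub_nonneg.2 h) hε.2) (by linarith [ht₁.1, ht₂.2]) hκ.1 hκ.2
  rw [abs_sub_comm, K2op_eq_abelIntegral, K2op_eq_abelIntegral]
  calc _ ≤ _ := hbound
    _ ≤ (2 * (M * S) * |t₁ - t₂| ^ κ + Lip * |t₁ - t₂| ^ κ * S * 1) / (1 - μ) := by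
      gcongr
      exact rpow_le_one hεt₁ (hεt.trans hεt₂) (by linarith)
    _ = _ := by ring

theorem K2_holder_increment_bound_fractional_general (μ κ lam ε : ℝ) (hμ : μ ∈ Ioo (0:ℝ) 1)
    (hκ : κ ∈ Ioo (0:ℝ) (1 - μ)) (hlam : lam ∈ Ioc (0:ℝ) 1) (hε : ε ∈ Ioc (0:ℝ) 1)
    (K : ℝ → ℝ → ℝ)
    (hKcont : ContinuousOn (fun p : ℝ × ℝ => K p.1 p.2) (Icc 0 1 ×ˢ Icc 0 1))
    (Lip : ℝ)
    (hKH : ∀ θ₁ ∈ Icc (0:ℝ) 1, ∀ θ₂ ∈ Icc (0:ℝ) 1, ∀ s ∈ Icc (0:ℝ) 1,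
      |K θ₁ s - K θ₂ s| ≤ Lip * |θ₁ - θ₂| ^ κ) :
    ∃ C > (0:ℝ), ∀ v : ℝ → ℝ, ContinuousOn v (Icc (0:ℝ) 1) →
      ∀ θ₁ ∈ Icc (0:ℝ) 1, ∀ θ₂ ∈ Icc (0:ℝ) 1, θ₁ ≠ θ₂ →
      |K2op μ ε K v (θ₁ ^ (1/lam)) - K2op μ ε K v (θ₂ ^ (1/lam))|
        ≤ C * |θ₁ - θ₂| ^ κ * sSup ((fun θ => |v θ|) '' Icc (0:ℝ) 1) := by
  have h0 : (0:ℝ) ∈ Icc (0:ℝ) 1 := left_mem_Icc.2 zero_le_one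
  have hLip : 0 ≤ Lip := by
    simpa using (abs_nonneg _).trans (hKH 1 (right_mem_Icc.2 zero_le_one) 0 h0 0 h0)
  obtain ⟨M, hM0, hM⟩ : ∃ M > 0, ∀ t ∈ Icc (0:ℝ) 1, ∀ s ∈ Icc (0:ℝ) 1, |K t s| ≤ M := by
    obtain ⟨M₀, hM₀⟩ := (isCompact_Icc.prod isCompact_Icc).exists_bound_of_continuousOn hKcont
    exact ⟨max M₀ 1, by positivity,
      fun t ht s hs => (hM₀ (t, s) ⟨ht, hs⟩).trans (le_max_left _ _)⟩
  have hK : ∀ t ∈ Icc (0:ℝ) 1, ContinuousOn (K t) (Icc 0 1) := fun t ht =>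
    hKcont.comp (Continuous.continuousOn (by fun_prop)) fun s hs => mk_mem_prod ht hs
  have hp : 1 ≤ 1 / lam := (le_div_iff₀ hlam.1).2 (by linarith [hlam.2])
  have hμ1 : 0 < 1 - μ := sub_pos.2 hμ.2
  refine ⟨(1 / lam) ^ κ * ((2 * M + Lip) / (1 - μ)), by positivity, ?_⟩
  intro v hv θ₁ hθ₁ θ₂ hθ₂ _
  set S := sSup ((fun θ => |v θ|) '' Icc (0:ℝ) 1)
  have hS : ∀ s ∈ Icc (0:ℝ) 1, |v s| ≤ S := fun s hs =>
    le_csSup (isCompact_Icc.image_of_continuousOn hv.abs).bddAbove (mem_image_of_mem _ hs)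
  have hpow : ∀ θ ∈ Icc (0:ℝ) 1, θ ^ (1 / lam) ∈ Icc (0:ℝ) 1 := fun θ hθ =>
    ⟨rpow_nonneg hθ.1 _, rpow_le_one hθ.1 hθ.2 (by linarith)⟩
  calc _ ≤ (2 * M + Lip) * S / (1 - μ) * |θ₁ ^ (1 / lam) - θ₂ ^ (1 / lam)| ^ κ :=
        abs_K2op_sub_le ⟨hμ.1.le, hμ.2⟩ ⟨hκ.1.le, hκ.2.le⟩ ⟨hε.1.le, hε.2⟩ hK hM hKH hv hS
          (hpow θ₁ hθ₁) (hpow θ₂ hθ₂)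
    _ ≤ (2 * M + Lip) * S / (1 - μ) * (1 / lam * |θ₁ - θ₂|) ^ κ := by
        have hS0 : 0 ≤ S := (abs_nonneg _).trans (hS 0 h0)
        gcongr
        exacts [hκ.1.le, abs_rpow_sub_rpow_le_mul_abs_sub hp hθ₁ hθ₂]
    _ = _ := by rw [mul_rpow (by positivity) (abs_nonneg _)]; ring

/-- Hölder-type bound for the composition of `𝒦₂` with `θ ↦ θ^{1/λ}`:
for `μ ∈ (0,1)`, `κ ∈ (0,1-μ)`, `λ ∈ (0,1]`, `ε ∈ (0,1]` and `K` continuous and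
`κ`-Hölder in its first variable, there is `C > 0` with
`|(𝒦₂v)(θ₁^{1/λ}) - (𝒦₂v)(θ₂^{1/λ})| ≤ C |θ₁-θ₂|^κ · max |v|`
for all continuous `v` and `θ₁ ≠ θ₂` in `[0,1]`. -/
theorem K2_holder_increment_bound_fractional (μ κ lam ε : ℝ) (hμ : μ ∈ Ioo (0:ℝ) 1)
    (hκ : κ ∈ Ioo (0:ℝ) (1 - μ)) (hlam : lam ∈ Ioc (0:ℝ) 1) (hε : ε ∈ Ioc (0:ℝ) 1)
    (K : ℝ → ℝ → ℝ)
    (hKcont : ContinuousOn (fun p : ℝ × ℝ => K p.1 p.2) (Icc 0 1 ×ˢ Icc 0 1))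
    (Lip : ℝ) (hLip : 0 ≤ Lip)
    (hKH : ∀ θ₁ ∈ Icc (0:ℝ) 1, ∀ θ₂ ∈ Icc (0:ℝ) 1, ∀ s ∈ Icc (0:ℝ) 1,
      |K θ₁ s - K θ₂ s| ≤ Lip * |θ₁ - θ₂| ^ κ) :
    ∃ C > (0:ℝ), ∀ v : ℝ → ℝ, ContinuousOn v (Icc (0:ℝ) 1) →
      ∀ θ₁ ∈ Icc (0:ℝ) 1, ∀ θ₂ ∈ Icc (0:ℝ) 1, θ₁ ≠ θ₂ →
      |K2op μ ε K v (θ₁ ^ (1/lam)) - K2op μ ε K v (θ₂ ^ (1/lam))|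
        ≤ C * |θ₁ - θ₂| ^ κ * sSup ((fun θ => |v θ|) '' Icc (0:ℝ) 1) :=
  K2_holder_increment_bound_fractional_general μ κ lam ε hμ hκ hlam hε K hKcont Lip hKH
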